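/- arXiv:2011.02700 — 6 statements merged into one kernel-verified Lean document; each statement's English description precedes it below -/
import Mathlib

section
/- Suppose k·α ≤ 1 and (2k−1)·α > 1, let λ > 0, let μ > k·p·r/(1−p), and let η₂ ∈ (0,1) satisfy ((2k−1)α − 1)/(2(k−1)α) − μ·η₂^{k−1} > 0. Then ∑_{S=⌈n·η₁(n)⌉}^{⌊n·η₂⌋} Φ_n(S) → 0 as n → ∞. -/
/-
Write `q = 1/d` and `s = S/n`. A Chernoff bound for `B_n(S)`, and `log f ≤ f - 1` together with
`s^k - q^k ≤ k s^(k-1) (s - q)` for `W_n(S)`, give `Φ_n(S) ≤ exp (n ρ(s))` with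
`ρ(s) = (s - q) - s log (s/q) + μ ln d · s^(k-1) (s - q)` (`rbRate`), once `μ` exceeds
`r p k / ((1-p)(1-q^k))`. Put `γ = α (1 - μ η₂^(k-1)) / 2`.
For `η₁ ≤ s ≤ n^(-γ)` the polynomial term is at most half the entropy gain, so
`ρ(s) ≤ -(s-q)²/(8s) ≤ -(η₁-q)²/(8η₁)`, and `n (η₁-q)²/η₁` grows like `n^((2k-1)α-1) / ln² n`
because `η₁ - q ≤ q` (this is where `kα ≤ 1` enters).
For `n^(-γ) < s ≤ η₂`, `log (s/q) ≥ (α - γ) ln n` beats `μ ln d · η₂^(k-1)` by `γ ln n`, so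
`ρ(s) ≤ -s ≤ -n^(-γ)`. Either way every term is at most `(n+1)^(-2)`, and there are at most
`n + 1` terms.
-/

open Filter Finset

/-- Domain size `d = n^α` of Model RB. -/
noncomputable def dRB (α : ℝ) (n : ℕ) : ℝ := (n : ℝ) ^ α

/-- `m = n · ln d`. -/
noncomputable def mRB (α : ℝ) (n : ℕ) : ℝ := (n : ℝ) * Real.log (dRB α n)

/-- `f_n(s) = 1 + (p/(1-p)) (s^k - d^{-k})/(1 - d^{-k})`. -/
noncomputable def fRB (α p : ℝ) (k n : ℕ) (s : ℝ) : ℝ :=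
  1 + (p / (1 - p)) * (s ^ k - dRB α n ^ (-(k : ℝ))) / (1 - dRB α n ^ (-(k : ℝ)))

/-- `B_n(S) = C(n,S) (1/d)^S (1-1/d)^{n-S}`. -/
noncomputable def BRB (α : ℝ) (n S : ℕ) : ℝ :=
  (n.choose S : ℝ) * (1 / dRB α n) ^ S * (1 - 1 / dRB α n) ^ (n - S)

/-- `W_n(S) = f_n(S/n)^{r m}`. -/
noncomputable def WRB (α p r : ℝ) (k n S : ℕ) : ℝ :=
  fRB α p k n ((S : ℝ) / (n : ℝ)) ^ (r * mRB α n)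

/-- `Φ_n(S) = B_n(S) W_n(S)`. -/
noncomputable def PhiRB (α p r : ℝ) (k n S : ℕ) : ℝ := BRB α n S * WRB α p r k n S

/-- `g(s) = -k(k-1)(1-s)s^{k-1}/2`. -/
noncomputable def gRB (k : ℕ) (s : ℝ) : ℝ :=
  -((k : ℝ) * ((k : ℝ) - 1)) * (1 - s) * s ^ (k - 1) / 2

/-- `η₁(n) = 1/d + λ/(n^{1-(k-1)α} ln d)`. -/
noncomputable def eta1 (α lam : ℝ) (k n : ℕ) : ℝ :=
  1 / dRB α n + lam / ((n : ℝ) ^ (1 - ((k : ℝ) - 1) * α) * Real.log (dRB α n))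

/-- First moment `E[X] = d^n (1-p)^{r m}`. -/
noncomputable def E1RB (α p r : ℝ) (n : ℕ) : ℝ := dRB α n ^ n * (1 - p) ^ (r * mRB α n)

/-- Second moment `E[X²]`. -/
noncomputable def E2RB (α p r : ℝ) (k n : ℕ) : ℝ :=
  ∑ S ∈ Finset.range (n + 1),
    dRB α n ^ n * (n.choose S : ℝ) * (dRB α n - 1) ^ (n - S) *
      ((1 - p) * ((S.choose k : ℝ) / (n.choose k : ℝ)) +
        ((1 - p) ^ 2 - p * (1 - p) * dRB α n ^ (-(k : ℝ)) / (1 - dRB α n ^ (-(k : ℝ)))) *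
          (1 - (S.choose k : ℝ) / (n.choose k : ℝ))) ^ (r * mRB α n)

open Real

lemma Real.log_le_sub_one_sub_sq {t : ℝ} (ht0 : 0 < t) (ht1 : t ≤ 1) :
    log t ≤ t - 1 - (1 - t) ^ 2 / 4 := by
  have hu0 : 0 < √t := sqrt_pos.2 ht0
  have hu1 : √t ≤ 1 := sqrt_le_one.2 ht1
  calc log t = 2 * log √t := by rw [log_sqrt ht0.le]; ring
    _ ≤ 2 * (√t - 1) := by linarith [log_le_sub_one_of_pos hu0]
    _ ≤ √t ^ 2 - 1 - (1 - √t ^ 2) ^ 2 / 4 := by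
        -- the gap is `(1 - √t)³ (3 + √t) / 4`
        nlinarith [mul_nonneg (pow_nonneg (sub_nonneg.2 hu1) 3) (by positivity : (0 : ℝ) ≤ 3 + √t)]
    _ = t - 1 - (1 - t) ^ 2 / 4 := by rw [sq_sqrt ht0.le]

lemma pow_sub_pow_le_mul_sub {R : Type*} [CommRing R] [LinearOrder R] [IsOrderedRing R]
    {q s : R} (hq : 0 ≤ q) (hqs : q ≤ s) (k : ℕ) :
    s ^ k - q ^ k ≤ k * s ^ (k - 1) * (s - q) := by
  have h := abs_pow_sub_pow_le s q k
  rw [abs_of_nonneg (sub_nonneg.2 hqs), abs_of_nonneg (hq.trans hqs), abs_of_nonneg hq,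
    max_eq_left hqs] at h
  calc s ^ k - q ^ k ≤ (s - q) * k * s ^ (k - 1) := (le_abs_self _).trans h
    _ = k * s ^ (k - 1) * (s - q) := by ring

lemma mul_pow_le_sub_of_le {c q η s t : ℝ} {k : ℕ} (hc : 0 ≤ c) (hη : 0 ≤ η) (hηs : η ≤ s)
    (hst : s ≤ t) (hη' : c * η ^ k ≤ η - q) (ht : c * k * t ^ (k - 1) ≤ 1) :
    c * s ^ k ≤ s - q := by
  have h1 := pow_sub_pow_le_mul_sub hη hηs k
  have h2 : c * k * s ^ (k - 1) ≤ 1 :=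
    le_trans (by gcongr; exact hη.trans hηs) ht
  nlinarith [mul_le_mul_of_nonneg_left h1 hc, mul_le_mul_of_nonneg_right h2 (sub_nonneg.2 hηs)]

lemma sub_sq_div_le_sub_sq_div {q η s : ℝ} (hq : 0 ≤ q) (hqη : q ≤ η) (hηs : η ≤ s)
    (hη : 0 < η) : (η - q) ^ 2 / η ≤ (s - q) ^ 2 / s := by
  rw [div_le_div_iff₀ hη (hη.trans_le hηs)]
  nlinarith [mul_nonneg (sub_nonneg.2 hηs) (sub_nonneg.2 (mul_le_mul hqη (hqη.trans hηs) hq hη.le))]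

lemma log_add_one_le_two_mul_log {x : ℝ} (hx : 2 ≤ x) : log (x + 1) ≤ 2 * log x := by
  calc log (x + 1) ≤ log (x ^ 2) := log_le_log (by linarith) (by nlinarith)
    _ = 2 * log x := by rw [log_pow]; norm_num

lemma Nat.choose_mul_pow_mul_one_sub_pow_le_exp {q : ℝ} (hq0 : 0 ≤ q) (hq1 : q ≤ 1)
    (n S : ℕ) (u : ℝ) :
    (n.choose S : ℝ) * q ^ S * (1 - q) ^ (n - S) ≤ exp (n * q * (exp u - 1) - u * S) := by
  obtain hS | hS := lt_or_ge n S
  · rw [Nat.choose_eq_zero_of_lt hS, Nat.cast_zero, zero_mul, zero_mul]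
    exact (exp_pos _).le
  rw [exp_sub, le_div_iff₀ (exp_pos _)]
  calc (n.choose S : ℝ) * q ^ S * (1 - q) ^ (n - S) * exp (u * S)
      = (q * exp u) ^ S * (1 - q) ^ (n - S) * n.choose S := by
        rw [mul_pow, ← exp_nat_mul, mul_comm (S : ℝ) u]; ring
    _ ≤ ∑ i ∈ range (n + 1), (q * exp u) ^ i * (1 - q) ^ (n - i) * n.choose i :=
        single_le_sum (f := fun i => (q * exp u) ^ i * (1 - q) ^ (n - i) * n.choose i)
          (fun i _ => by positivity) (mem_range.2 (Nat.lt_succ_of_le hS))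
    _ = (1 + q * (exp u - 1)) ^ n := by rw [← add_pow]; ring
    _ ≤ exp (q * (exp u - 1)) ^ n :=
        pow_le_pow_left₀ (by nlinarith [mul_nonneg hq0 (exp_pos u).le])
          (by linarith [add_one_le_exp (q * (exp u - 1))]) n
    _ = exp (n * q * (exp u - 1)) := by rw [← exp_nat_mul]; ring_nf

lemma eventually_const_mul_log_pow_le_rpow {c : ℝ} (hc : 0 < c) (C : ℝ) (j : ℕ) :
    ∀ᶠ n : ℕ in atTop, C * log n ^ j ≤ (n : ℝ) ^ c := by
  have h := ((isLittleO_log_rpow_rpow_atTop (j : ℝ) hc).const_mul_left C).eventuallyLE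
  filter_upwards [tendsto_natCast_atTop_atTop.eventually h] with n hn
  simp only [rpow_natCast, norm_mul, norm_pow, Real.norm_eq_abs,
    abs_of_nonneg (rpow_nonneg (Nat.cast_nonneg n) c)] at hn
  exact (le_abs_self _).trans (by simpa [abs_mul, abs_pow] using hn)

lemma eventually_le_mul_log {a : ℝ} (ha : 0 < a) (c : ℝ) :
    ∀ᶠ n : ℕ in atTop, c ≤ a * log n :=
  ((tendsto_log_atTop.comp tendsto_natCast_atTop_atTop).const_mul_atTop ha).eventually_ge_atTop c

lemma eventually_mul_log_mul_rpow_neg_pow_le_one {γ : ℝ} (hγ : 0 < γ) {m : ℕ} (hm : m ≠ 0)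
    (C : ℝ) : ∀ᶠ n : ℕ in atTop, C * log n * ((n : ℝ) ^ (-γ)) ^ m ≤ 1 := by
  have hc : 0 < γ * m := mul_pos hγ (by positivity)
  filter_upwards [eventually_const_mul_log_pow_le_rpow hc C 1, eventually_gt_atTop 0]
    with n h hn
  rw [← rpow_natCast, ← rpow_mul (Nat.cast_nonneg n), neg_mul, rpow_neg (Nat.cast_nonneg n),
    ← div_eq_mul_inv, div_le_one (rpow_pos_of_pos (by positivity) _)]
  simpa using h

lemma tendsto_sum_Icc_zero_of_le_inv_sq {f : ℕ → ℕ → ℝ} {a b : ℕ → ℕ} (hb : ∀ n, b n ≤ n)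
    (hf : ∀ᶠ n in atTop, ∀ S ∈ Icc (a n) (b n), 0 ≤ f n S ∧ f n S ≤ (((n : ℝ) + 1) ^ 2)⁻¹) :
    Tendsto (fun n => ∑ S ∈ Icc (a n) (b n), f n S) atTop (nhds 0) := by
  refine tendsto_of_tendsto_of_tendsto_of_le_of_le' tendsto_const_nhds
    tendsto_one_div_add_atTop_nhds_zero_nat ?_ ?_
  · filter_upwards [hf] with n hn using sum_nonneg fun S hS => (hn S hS).1
  filter_upwards [hf] with n hn
  have hcard : ((Icc (a n) (b n)).card : ℝ) ≤ n + 1 := by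
    rw [Nat.card_Icc]; exact_mod_cast (by have := hb n; omega)
  calc ∑ S ∈ Icc (a n) (b n), f n S
      ≤ (Icc (a n) (b n)).card * (((n : ℝ) + 1) ^ 2)⁻¹ := by
        rw [← nsmul_eq_mul]; exact sum_le_card_nsmul _ _ _ fun S hS => (hn S hS).2
    _ ≤ (n + 1) * (((n : ℝ) + 1) ^ 2)⁻¹ := by gcongr
    _ = 1 / ((n : ℝ) + 1) := by field_simp

noncomputable def rbRate (q M : ℝ) (k : ℕ) (s : ℝ) : ℝ :=
  s - q - s * log (s / q) + M * s ^ (k - 1) * (s - q)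

section rbRate

variable {q M s : ℝ} {k : ℕ}

lemma rbRate_le_of_pow_le (hk : k ≠ 0) (hq : 0 < q) (hqs : q ≤ s) (hM : 8 * M * s ^ k ≤ s - q) :
    rbRate q M k s ≤ -((s - q) ^ 2 / (8 * s)) := by
  have hs : 0 < s := hq.trans_le hqs
  have hlog := log_le_sub_one_sub_sq (div_pos hq hs) ((div_le_one hs).2 hqs)
  have hentropy : s - q - s * log (s / q) ≤ -((s - q) ^ 2 / (4 * s)) := by
    have hexpand : s * (q / s - 1 - (1 - q / s) ^ 2 / 4) = -(s - q) - (s - q) ^ 2 / (4 * s) := by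
      field_simp; ring
    rw [← inv_div, log_inv]
    linarith [mul_le_mul_of_nonneg_left hlog hs.le]
  have hpoly : M * s ^ (k - 1) * (s - q) ≤ (s - q) ^ 2 / (8 * s) := by
    rw [le_div_iff₀ (by positivity)]
    calc M * s ^ (k - 1) * (s - q) * (8 * s) = 8 * M * (s ^ (k - 1) * s) * (s - q) := by ring
      _ = 8 * M * s ^ k * (s - q) := by rw [pow_sub_one_mul hk]
      _ ≤ (s - q) * (s - q) := mul_le_mul_of_nonneg_right hM (sub_nonneg.2 hqs)
      _ = (s - q) ^ 2 := by ring
  have hhalf : (s - q) ^ 2 / (4 * s) = 2 * ((s - q) ^ 2 / (8 * s)) := by field_simp; ring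
  unfold rbRate
  linarith

lemma rbRate_le_neg (hq : 0 ≤ q) (hs : 0 ≤ s) (hM : 0 ≤ M)
    (h : 2 + M * s ^ (k - 1) ≤ log (s / q)) : rbRate q M k s ≤ -s := by
  have h1 : M * s ^ (k - 1) * (s - q) ≤ M * s ^ (k - 1) * s := by gcongr; linarith
  unfold rbRate
  nlinarith [mul_le_mul_of_nonneg_left h hs]

lemma rbRate_le_neg_sub_sq_div {η t : ℝ} (hk : k ≠ 0) (hq : 0 < q) (hqη : q ≤ η) (hηs : η ≤ s)
    (hst : s ≤ t) (hM : 0 ≤ M) (hη : 8 * M * η ^ k ≤ η - q) (ht : 8 * M * k * t ^ (k - 1) ≤ 1) :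
    rbRate q M k s ≤ -((η - q) ^ 2 / (8 * η)) := by
  have hη0 : 0 < η := hq.trans_le hqη
  have hmono := sub_sq_div_le_sub_sq_div hq.le hqη hηs hη0
  refine (rbRate_le_of_pow_le hk hq (hqη.trans hηs)
    (mul_pow_le_sub_of_le (by positivity) hη0.le hηs hst hη ht)).trans ?_
  rw [neg_le_neg_iff, mul_comm 8 η, mul_comm 8 s, ← div_div, ← div_div]
  gcongr

end rbRate

section RBModel

variable {α p r mu lam γ η₂ : ℝ} {k n S : ℕ}

lemma one_le_dRB (hα : 0 ≤ α) (hn : 1 ≤ n) : 1 ≤ dRB α n :=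
  one_le_rpow (by exact_mod_cast hn) hα

lemma one_div_dRB_mem_Ioc (hα : 0 ≤ α) (hn : 1 ≤ n) : 1 / dRB α n ∈ Set.Ioc 0 1 := by
  have hd := one_le_dRB hα hn
  exact ⟨by positivity, (div_le_one (by positivity)).2 hd⟩

lemma one_div_dRB (α : ℝ) (n : ℕ) : 1 / dRB α n = (n : ℝ) ^ (-α) := by
  rw [dRB, rpow_neg (Nat.cast_nonneg n), one_div]

lemma log_dRB (α : ℝ) (hn : 0 < n) : log (dRB α n) = α * log n :=
  log_rpow (by exact_mod_cast hn) α

lemma fRB_eq (α p : ℝ) (k n : ℕ) (s : ℝ) :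
    fRB α p k n s = 1 + p / (1 - p) * (s ^ k - (1 / dRB α n) ^ k) / (1 - (1 / dRB α n) ^ k) := by
  have hd : 0 ≤ dRB α n := rpow_nonneg (Nat.cast_nonneg n) α
  rw [fRB, rpow_neg hd, rpow_natCast, one_div, inv_pow]

lemma one_le_fRB {s : ℝ} (hα : 0 ≤ α) (hn : 1 ≤ n) (hp0 : 0 ≤ p) (hp1 : p < 1)
    (hqs : 1 / dRB α n ≤ s) : 1 ≤ fRB α p k n s := by
  obtain ⟨hq0, hq1⟩ := one_div_dRB_mem_Ioc hα hn
  have hp : 0 ≤ p / (1 - p) := div_nonneg hp0 (sub_pos.2 hp1).le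
  have hsk : (1 / dRB α n) ^ k ≤ s ^ k := pow_le_pow_left₀ hq0.le hqs k
  have hqk : (1 / dRB α n) ^ k ≤ 1 := pow_le_one₀ hq0.le hq1
  rw [fRB_eq, le_add_iff_nonneg_right]
  exact div_nonneg (mul_nonneg hp (sub_nonneg.2 hsk)) (sub_nonneg.2 hqk)

lemma BRB_nonneg (hα : 0 ≤ α) (hn : 1 ≤ n) : 0 ≤ BRB α n S := by
  obtain ⟨hq0, hq1⟩ := one_div_dRB_mem_Ioc hα hn
  unfold BRB
  positivity

lemma WRB_nonneg (hα : 0 ≤ α) (hn : 1 ≤ n) (hp0 : 0 ≤ p) (hp1 : p < 1)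
    (hqS : 1 / dRB α n ≤ S / n) : 0 ≤ WRB α p r k n S :=
  rpow_nonneg (zero_le_one.trans (one_le_fRB hα hn hp0 hp1 hqS)) _

lemma PhiRB_nonneg (hα : 0 ≤ α) (hn : 1 ≤ n) (hp0 : 0 ≤ p) (hp1 : p < 1)
    (hqS : 1 / dRB α n ≤ S / n) : 0 ≤ PhiRB α p r k n S :=
  mul_nonneg (BRB_nonneg hα hn) (WRB_nonneg hα hn hp0 hp1 hqS)

lemma BRB_le_exp (hα : 0 ≤ α) (hn : 1 ≤ n) (hqS : 1 / dRB α n ≤ S / n) :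
    BRB α n S ≤ exp (n * (S / n - 1 / dRB α n - S / n * log (S / n / (1 / dRB α n)))) := by
  obtain ⟨hq0, hq1⟩ := one_div_dRB_mem_Ioc hα hn
  have h := Nat.choose_mul_pow_mul_one_sub_pow_le_exp hq0.le hq1 n S
    (log (S / n / (1 / dRB α n)))
  rw [exp_log (div_pos (hq0.trans_le hqS) hq0)] at h
  refine (le_of_eq_of_le (by rw [BRB]) h).trans_eq (congrArg exp ?_)
  have hd : dRB α n ≠ 0 := (zero_lt_one.trans_le (one_le_dRB hα hn)).ne'
  field_simp

lemma WRB_le_exp (hα : 0 ≤ α) (hn : 1 ≤ n) (hp0 : 0 ≤ p) (hp1 : p < 1) (hr : 0 ≤ r)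
    (hK : r * (p / (1 - p)) * k / (1 - (1 / dRB α n) ^ k) ≤ mu)
    (hqS : 1 / dRB α n ≤ S / n) :
    WRB α p r k n S ≤
      exp (n * (mu * log (dRB α n) * (S / n) ^ (k - 1) * (S / n - 1 / dRB α n))) := by
  obtain ⟨hq0, hq1⟩ := one_div_dRB_mem_Ioc hα hn
  set q := 1 / dRB α n
  set s := (S : ℝ) / n
  have hf := one_le_fRB (k := k) hα hn hp0 hp1 hqS
  have hL : 0 ≤ log (dRB α n) := log_nonneg (one_le_dRB hα hn)
  have hqk : 0 ≤ 1 - q ^ k := sub_nonneg.2 (pow_le_one₀ hq0.le hq1)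
  have hlog : log (fRB α p k n s) ≤ p / (1 - p) * (k * s ^ (k - 1) * (s - q)) / (1 - q ^ k) := by
    have := pow_sub_pow_le_mul_sub hq0.le hqS k
    calc log (fRB α p k n s) ≤ fRB α p k n s - 1 := log_le_sub_one_of_pos (by linarith)
      _ = p / (1 - p) * (s ^ k - q ^ k) / (1 - q ^ k) := by rw [fRB_eq]; ring
      _ ≤ _ := by gcongr
  rw [WRB, rpow_def_of_pos (zero_lt_one.trans_le hf), mRB]
  refine exp_le_exp.2 ?_
  calc log (fRB α p k n s) * (r * (n * log (dRB α n)))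
      ≤ p / (1 - p) * (k * s ^ (k - 1) * (s - q)) / (1 - q ^ k) * (r * (n * log (dRB α n))) := by
        gcongr
    _ = r * (p / (1 - p)) * k / (1 - q ^ k) * (n * log (dRB α n) * s ^ (k - 1) * (s - q)) := by
        ring
    _ ≤ mu * (n * log (dRB α n) * s ^ (k - 1) * (s - q)) := by gcongr
    _ = n * (mu * log (dRB α n) * s ^ (k - 1) * (s - q)) := by ring

lemma PhiRB_le_exp_rbRate (hα : 0 ≤ α) (hn : 1 ≤ n) (hp0 : 0 ≤ p)
    (hp1 : p < 1) (hr : 0 ≤ r) (hK : r * (p / (1 - p)) * k / (1 - (1 / dRB α n) ^ k) ≤ mu)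
    (hqS : 1 / dRB α n ≤ S / n) :
    PhiRB α p r k n S ≤ exp (n * rbRate (1 / dRB α n) (mu * log (dRB α n)) k (S / n)) := by
  rw [PhiRB, rbRate, mul_add, exp_add]
  exact mul_le_mul (BRB_le_exp hα hn hqS) (WRB_le_exp hα hn hp0 hp1 hr hK hqS)
    (WRB_nonneg hα hn hp0 hp1 hqS) (exp_pos _).le

lemma one_div_dRB_lt_eta1 (hα : 0 < α) (hn : 1 < n) (hlam : 0 < lam) :
    1 / dRB α n < eta1 α lam k n := by
  have hL : 0 < log (dRB α n) := log_pos (one_lt_rpow (by exact_mod_cast hn) hα)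
  rw [eta1, lt_add_iff_pos_right]
  positivity

lemma PhiRB_le_exp_neg_min (hα : 0 < α) (hk : k ≠ 0)
    (hp0 : 0 ≤ p) (hp1 : p < 1) (hr : 0 ≤ r) (hmu : 0 ≤ mu) (hlam : 0 < lam) (hn : 1 < n)
    (hK : r * (p / (1 - p)) * k / (1 - (1 / dRB α n) ^ k) ≤ mu)
    (hsmall : 8 * (mu * log (dRB α n)) * k * ((n : ℝ) ^ (-γ)) ^ (k - 1) ≤ 1)
    (heta1 : 8 * (mu * log (dRB α n)) * eta1 α lam k n ^ k ≤ eta1 α lam k n - 1 / dRB α n)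
    (hlarge : 2 + mu * α * log n * η₂ ^ (k - 1) ≤ (α - γ) * log n)
    (hS₁ : n * eta1 α lam k n ≤ S) (hS₂ : S ≤ n * η₂) :
    PhiRB α p r k n S ≤ exp (-min ((n : ℝ) ^ (1 - γ))
      (n * (eta1 α lam k n - 1 / dRB α n) ^ 2 / (8 * eta1 α lam k n))) := by
  have hn0 : (0 : ℝ) < n := by positivity
  have hq : 0 < 1 / dRB α n := (one_div_dRB_mem_Ioc hα.le hn.le).1
  have hqη := one_div_dRB_lt_eta1 (k := k) hα hn hlam
  have hη₁s : eta1 α lam k n ≤ S / n := (le_div_iff₀ hn0).2 (by linarith)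
  have hsη₂ : (S : ℝ) / n ≤ η₂ := (div_le_iff₀ hn0).2 (by linarith)
  have hL : 0 ≤ log (dRB α n) := log_nonneg (one_le_dRB hα.le hn.le)
  have hlogd : log (dRB α n) = α * log n := log_dRB α (by omega)
  have hlogq : log (1 / dRB α n) = -α * log n := by rw [one_div_dRB, log_rpow hn0]
  set q := 1 / dRB α n
  set η₁ := eta1 α lam k n
  set s := (S : ℝ) / n
  have hs : 0 < s := hq.trans (hqη.trans_le hη₁s)
  refine (PhiRB_le_exp_rbRate hα.le hn.le hp0 hp1 hr hK (hqη.le.trans hη₁s)).trans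
    (exp_le_exp.2 ?_)
  rcases le_or_gt s ((n : ℝ) ^ (-γ)) with hsγ | hsγ
  · have hrate := rbRate_le_neg_sub_sq_div hk hq hqη.le hη₁s hsγ (by positivity) heta1 hsmall
    calc n * rbRate q (mu * log (dRB α n)) k s ≤ n * -((η₁ - q) ^ 2 / (8 * η₁)) := by gcongr
      _ = -(n * (η₁ - q) ^ 2 / (8 * η₁)) := by ring
      _ ≤ _ := neg_le_neg (min_le_right _ _)
  · have hlog : 2 + mu * log (dRB α n) * s ^ (k - 1) ≤ log (s / q) := by
      have hlogs : -γ * log n ≤ log s := by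
        rw [← log_rpow hn0]; exact log_le_log (rpow_pos_of_pos hn0 _) hsγ.le
      have hpow : s ^ (k - 1) ≤ η₂ ^ (k - 1) := pow_le_pow_left₀ hs.le hsη₂ _
      rw [log_div hs.ne' hq.ne', hlogq, hlogd]
      nlinarith [mul_le_mul_of_nonneg_left hpow
        (by positivity : 0 ≤ mu * α * log n), log_nonneg (Nat.one_le_cast.2 hn.le)]
    have hrate := rbRate_le_neg hq.le hs.le (by positivity) hlog
    have hns : (n : ℝ) ^ (1 - γ) ≤ n * s := by
      rw [sub_eq_add_neg, rpow_add hn0, rpow_one]; gcongr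
    calc n * rbRate q (mu * log (dRB α n)) k s ≤ n * -s := by gcongr
      _ ≤ -((n : ℝ) ^ (1 - γ)) := by linarith
      _ ≤ _ := neg_le_neg (min_le_left _ _)

lemma eta1_sub_one_div_dRB (α lam : ℝ) (k : ℕ) (hn : 0 < n) :
    eta1 α lam k n - 1 / dRB α n = lam * (n : ℝ) ^ (((k : ℝ) - 1) * α - 1) / (α * log n) := by
  have hn0 : (0 : ℝ) < n := by exact_mod_cast hn
  rw [eta1, add_sub_cancel_left, log_dRB α hn,
    show ((k : ℝ) - 1) * α - 1 = -(1 - ((k : ℝ) - 1) * α) by ring, rpow_neg hn0.le]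
  ring

lemma eta1_le_two_mul_rpow_neg (hα : 0 < α) (hkα : k * α ≤ 1)
    (hn : 1 < n) (hlam : lam ≤ α * log n) : eta1 α lam k n ≤ 2 * (n : ℝ) ^ (-α) := by
  have hn1 : (1 : ℝ) < n := by exact_mod_cast hn
  have hP : (n : ℝ) ^ (((k : ℝ) - 1) * α - 1) ≤ (n : ℝ) ^ (-α) :=
    rpow_le_rpow_of_exponent_le hn1.le (by linarith)
  have hδ : lam * (n : ℝ) ^ (((k : ℝ) - 1) * α - 1) / (α * log n) ≤ (n : ℝ) ^ (-α) := by
    rw [div_le_iff₀ (mul_pos hα (log_pos hn1))]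
    nlinarith [mul_le_mul hlam hP (rpow_pos_of_pos (by positivity) _).le
      (mul_pos hα (log_pos hn1)).le]
  have := eta1_sub_one_div_dRB α lam k (n := n) (by omega)
  rw [one_div_dRB] at this
  linarith

lemma eventually_rbK_le (hα : 0 < α) (hk : k ≠ 0)
    (hmu : k * p * r / (1 - p) < mu) :
    ∀ᶠ n : ℕ in atTop, r * (p / (1 - p)) * k / (1 - (1 / dRB α n) ^ k) ≤ mu := by
  have hq : Tendsto (fun n : ℕ => 1 / dRB α n) atTop (nhds 0) := by
    simp only [one_div]
    exact ((tendsto_rpow_atTop hα).comp tendsto_natCast_atTop_atTop).inv_tendsto_atTop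
  have h : Tendsto (fun n : ℕ => r * (p / (1 - p)) * k / (1 - (1 / dRB α n) ^ k)) atTop
      (nhds (r * (p / (1 - p)) * k / (1 - 0 ^ k))) :=
    tendsto_const_nhds.div (tendsto_const_nhds.sub (hq.pow k)) (by simp [hk])
  rw [zero_pow hk, sub_zero, div_one] at h
  have hlim : r * (p / (1 - p)) * k < mu := by
    convert hmu using 1; ring
  filter_upwards [h.eventually (gt_mem_nhds hlim)] with n hn using hn.le

lemma eventually_mul_eta1_pow_le (hα : 0 < α) (hkα : k * α ≤ 1)
    (hkα2 : 1 < (2 * k - 1) * α) (hlam : 0 < lam) (hmu : 0 ≤ mu) :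
    ∀ᶠ n : ℕ in atTop,
      8 * (mu * log (dRB α n)) * eta1 α lam k n ^ k ≤ eta1 α lam k n - 1 / dRB α n := by
  filter_upwards [eventually_const_mul_log_pow_le_rpow (sub_pos.2 hkα2)
    (8 * 2 ^ k * mu * α ^ 2 / lam) 2, eventually_le_mul_log hα lam, eventually_gt_atTop 1]
    with n hN hlamℓ hn
  have hn0 : (0 : ℝ) < n := by positivity
  have hη₁ : 0 < eta1 α lam k n :=
    (one_div_dRB_mem_Ioc hα.le hn.le).1.trans (one_div_dRB_lt_eta1 hα hn hlam)
  have hη₁q := eta1_le_two_mul_rpow_neg hα hkα hn hlamℓ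
  have hP : (n : ℝ) ^ (((k : ℝ) - 1) * α - 1) =
      (n : ℝ) ^ ((2 * (k : ℝ) - 1) * α - 1) * ((n : ℝ) ^ (-α)) ^ k := by
    rw [← rpow_natCast, ← rpow_mul hn0.le, ← rpow_add hn0]
    ring_nf
  rw [eta1_sub_one_div_dRB α lam k (by omega), log_dRB α (by omega), hP]
  calc 8 * (mu * (α * log n)) * eta1 α lam k n ^ k
      ≤ 8 * (mu * (α * log n)) * (2 * (n : ℝ) ^ (-α)) ^ k := by gcongr
    _ = 8 * 2 ^ k * mu * α ^ 2 / lam * log n ^ 2 * (lam * ((n : ℝ) ^ (-α)) ^ k / (α * log n)) := by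
        field_simp
        ring
    _ ≤ (n : ℝ) ^ ((2 * (k : ℝ) - 1) * α - 1) * (lam * ((n : ℝ) ^ (-α)) ^ k / (α * log n)) := by
        gcongr
    _ = _ := by ring

lemma eventually_two_mul_log_le_eta1 (hα : 0 < α) (hkα : k * α ≤ 1)
    (hkα2 : 1 < (2 * k - 1) * α) (hlam : 0 < lam) :
    ∀ᶠ n : ℕ in atTop, 2 * log (n + 1) ≤
      n * (eta1 α lam k n - 1 / dRB α n) ^ 2 / (8 * eta1 α lam k n) := by
  filter_upwards [eventually_const_mul_log_pow_le_rpow (sub_pos.2 hkα2)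
    (64 * α ^ 2 / lam ^ 2) 3, eventually_le_mul_log hα lam, eventually_ge_atTop 2]
    with n hN hlamℓ hn
  have hn0 : (0 : ℝ) < n := by positivity
  have hn2 : (2 : ℝ) ≤ n := by exact_mod_cast hn
  have hη₁ : 0 < eta1 α lam k n :=
    (one_div_dRB_mem_Ioc hα.le (by omega)).1.trans (one_div_dRB_lt_eta1 hα hn hlam)
  have hη₁q := eta1_le_two_mul_rpow_neg hα hkα hn hlamℓ
  have hP : (n : ℝ) * ((n : ℝ) ^ (((k : ℝ) - 1) * α - 1)) ^ 2 =
      (n : ℝ) ^ ((2 * (k : ℝ) - 1) * α - 1) * (n : ℝ) ^ (-α) := by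
    rw [← rpow_add hn0, show (2 * (k : ℝ) - 1) * α - 1 + -α = 1 + (((k : ℝ) - 1) * α - 1) * 2 by
      ring, rpow_add hn0, rpow_one, rpow_mul hn0.le]
    norm_cast
  rw [eta1_sub_one_div_dRB α lam k (by omega)]
  calc 2 * log (n + 1) ≤ 4 * log n := by linarith [log_add_one_le_two_mul_log hn2]
    _ = 64 * α ^ 2 / lam ^ 2 * log n ^ 3 * (lam ^ 2 / (16 * α ^ 2 * log n ^ 2)) := by
        field_simp
        ring
    _ ≤ (n : ℝ) ^ ((2 * (k : ℝ) - 1) * α - 1) * (lam ^ 2 / (16 * α ^ 2 * log n ^ 2)) := by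
        gcongr
    _ = lam ^ 2 * (n * ((n : ℝ) ^ (((k : ℝ) - 1) * α - 1)) ^ 2) /
          (16 * α ^ 2 * log n ^ 2 * (n : ℝ) ^ (-α)) := by
        rw [hP]
        field_simp
    _ = n * (lam * (n : ℝ) ^ (((k : ℝ) - 1) * α - 1) / (α * log n)) ^ 2 /
          (8 * (2 * (n : ℝ) ^ (-α))) := by
        field_simp
        ring
    _ ≤ _ := by gcongr

lemma eventually_PhiRB_mem_Icc (hα : 0 < α) (hk : 2 ≤ k)
    (hp0 : 0 < p) (hp1 : p < 1) (hr0 : 0 < r) (hkα : (k : ℝ) * α ≤ 1)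
    (hkα2 : 1 < (2 * (k : ℝ) - 1) * α) (hlam : 0 < lam) (hmu : (k : ℝ) * p * r / (1 - p) < mu)
    (hη₂0 : 0 < η₂) (hθ : mu * η₂ ^ (k - 1) < 1) :
    ∀ᶠ n : ℕ in atTop, ∀ S ∈ Icc ⌈(n : ℝ) * eta1 α lam k n⌉₊ ⌊(n : ℝ) * η₂⌋₊,
      0 ≤ PhiRB α p r k n S ∧ PhiRB α p r k n S ≤ (((n : ℝ) + 1) ^ 2)⁻¹ := by
  have hmu0 : 0 ≤ mu := le_trans (div_nonneg (by positivity) (sub_pos.2 hp1).le) hmu.le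
  have hθ0 : 0 ≤ mu * η₂ ^ (k - 1) := by positivity
  set γ := α * (1 - mu * η₂ ^ (k - 1)) / 2 with hγ
  have hγ0 : 0 < γ := by have := sub_pos.2 hθ; positivity
  have hγ1 : γ < 1 := by nlinarith
  filter_upwards [eventually_rbK_le hα (by omega) hmu,
    eventually_le_mul_log hγ0 2,
    eventually_mul_log_mul_rpow_neg_pow_le_one hγ0 (by omega : k - 1 ≠ 0) (8 * mu * α * k),
    eventually_mul_eta1_pow_le hα hkα hkα2 hlam hmu0,
    eventually_const_mul_log_pow_le_rpow (sub_pos.2 hγ1) 4 1,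
    eventually_two_mul_log_le_eta1 hα hkα hkα2 hlam, eventually_ge_atTop 2]
    with n hK hγn hsmall heta1 hrate₁ hrate₂ hn
  intro S hS
  have hn0 : (0 : ℝ) < n := by positivity
  have hS₁ : n * eta1 α lam k n ≤ S := Nat.ceil_le.1 (mem_Icc.1 hS).1
  have hS₂ : (S : ℝ) ≤ n * η₂ := (Nat.cast_le.2 (mem_Icc.1 hS).2).trans (Nat.floor_le (by positivity))
  have hqS : 1 / dRB α n ≤ S / n :=
    (one_div_dRB_lt_eta1 hα hn hlam).le.trans ((le_div_iff₀ hn0).2 (by linarith))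
  have hlarge : 2 + mu * α * log n * η₂ ^ (k - 1) ≤ (α - γ) * log n := by
    nlinarith
  refine ⟨PhiRB_nonneg hα.le (by omega) hp0.le hp1 hqS, ?_⟩
  refine (PhiRB_le_exp_neg_min hα (by omega) hp0.le hp1 hr0.le hmu0 hlam hn hK
    (by rw [log_dRB α (by omega)]; linarith [hsmall]) heta1 hlarge hS₁ hS₂).trans ?_
  have hlog := log_add_one_le_two_mul_log (x := n) (by exact_mod_cast hn)
  have hsq : (2 : ℝ) * log (n + 1) = log (((n : ℝ) + 1) ^ 2) := by rw [log_pow]; norm_num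
  calc exp (-min ((n : ℝ) ^ (1 - γ)) _) ≤ exp (-(2 * log (n + 1))) :=
        exp_le_exp.2 (neg_le_neg (le_min (by linarith [pow_one (log (n : ℝ))]) hrate₂))
    _ = (((n : ℝ) + 1) ^ 2)⁻¹ := by rw [exp_neg, hsq, exp_log (by positivity)]

end RBModel

theorem stmt9_general (α p r lam mu η₂ : ℝ) (k : ℕ) (hα : 0 < α) (hk : 2 ≤ k)
    (hp0 : 0 < p) (hp1 : p < 1) (hr0 : 0 < r)
    (hkα : (k : ℝ) * α ≤ 1) (hkα2 : (2 * (k : ℝ) - 1) * α > 1)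
    (hlam : 0 < lam) (hmu : mu > (k : ℝ) * p * r / (1 - p))
    (hη₂0 : 0 < η₂) (hη₂1 : η₂ < 1)
    (hη₂ : ((2 * (k : ℝ) - 1) * α - 1) / (2 * ((k : ℝ) - 1) * α) - mu * η₂ ^ (k - 1) > 0) :
    Filter.Tendsto
      (fun n : ℕ => ∑ S ∈ Finset.Icc ⌈(n : ℝ) * eta1 α lam k n⌉₊ ⌊(n : ℝ) * η₂⌋₊,
        PhiRB α p r k n S)
      Filter.atTop (nhds 0) := by
  have hθ : mu * η₂ ^ (k - 1) < 1 := by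
    have hk2 : (2 : ℝ) ≤ k := by exact_mod_cast hk
    have : ((2 * (k : ℝ) - 1) * α - 1) / (2 * ((k : ℝ) - 1) * α) < 1 := by
      rw [div_lt_one (mul_pos (by linarith) hα)]
      linarith
    linarith
  refine tendsto_sum_Icc_zero_of_le_inv_sq (fun n => Nat.floor_le_of_le ?_)
    (eventually_PhiRB_mem_Icc hα hk hp0 hp1 hr0 hkα hkα2 hlam hmu hη₂0 hθ)
  exact mul_le_of_le_one_right (Nat.cast_nonneg n) hη₂1.le

/-- if kα ≤ 1 < (2k-1)α, λ > 0, μ > kpr/(1-p) and η₂ ∈ (0,1) with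
((2k-1)α-1)/(2(k-1)α) - μη₂^{k-1} > 0, then ∑_{S=⌈nη₁⌉}^{⌊nη₂⌋} Φ_n(S) → 0. -/
theorem stmt9 (α p r τ lam mu η₂ : ℝ) (k : ℕ) (hα : 0 < α) (hk : 2 ≤ k)
    (hp0 : 0 < p) (hp1 : p < 1) (hτ : τ = 1 / (1 - p)) (hr0 : 0 < r)
    (hkα : (k : ℝ) * α ≤ 1) (hkα2 : (2 * (k : ℝ) - 1) * α > 1)
    (hlam : 0 < lam) (hmu : mu > (k : ℝ) * p * r / (1 - p))
    (hη₂0 : 0 < η₂) (hη₂1 : η₂ < 1)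
    (hη₂ : ((2 * (k : ℝ) - 1) * α - 1) / (2 * ((k : ℝ) - 1) * α) - mu * η₂ ^ (k - 1) > 0) :
    Filter.Tendsto
      (fun n : ℕ => ∑ S ∈ Finset.Icc ⌈(n : ℝ) * eta1 α lam k n⌉₊ ⌊(n : ℝ) * η₂⌋₊,
        PhiRB α p r k n S)
      Filter.atTop (nhds 0) :=
  stmt9_general α p r lam mu η₂ k hα hk hp0 hp1 hr0 hkα hkα2 hlam hmu hη₂0 hη₂1 hη₂
end

section
/- Let τ > 1 be real, let k ≥ 2 be an integer with k ≥ τ·ln τ/(τ−1), and let 0 < r < 1/ln τ. Then for any constants 0 < η₂ < η₃ < 1, the maximum over s ∈ [η₂, η₃] of φ(s) = r·ln(1 + (τ−1)·s^k) − s is strictly negative. -/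
/-! Write `τ = exp L` and `q t = t / (1 - exp (-t))`, so that `q L = τ L / (τ - 1)`. Since `q` is
increasing (secant slopes of the convex `exp` through `0` increase), `log (exp (x L) - 1) - q L * log x`
has derivative `(q (x L) - q L) / x ≤ 0` on `(0, 1]`; comparing with `x = 1` gives
`1 + (τ - 1) s ^ k ≤ 1 + (τ - 1) s ^ (q L) ≤ τ ^ s`. Hence `r log (1 + (τ - 1) s ^ k) < s log τ / log τ = s`
pointwise, and the supremum over the compact interval is attained. -/

open Real Set

lemma div_one_sub_exp_neg_le_div_one_sub_exp_neg {x y : ℝ} (hx : 0 < x) (hxy : x ≤ y) :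
    x / (1 - exp (-x)) ≤ y / (1 - exp (-y)) := by
  have hy : 0 < y := hx.trans_le hxy
  have hslope := convexOn_exp.secant_mono (mem_univ 0) (mem_univ (-y)) (mem_univ (-x))
    (by linarith) (by linarith) (neg_le_neg hxy)
  rw [exp_zero, sub_zero, sub_zero, ← neg_div_neg_eq (exp (-y) - 1), ← neg_div_neg_eq (exp (-x) - 1),
    neg_neg, neg_neg, neg_sub, neg_sub] at hslope
  have hey : 0 < 1 - exp (-y) := sub_pos.2 (exp_lt_one_iff.2 (neg_neg_of_pos hy))
  simpa only [inv_div] using inv_anti₀ (div_pos hey hy) hslope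

lemma antitoneOn_log_exp_mul_sub_one_sub_log {L : ℝ} (hL : 0 < L) :
    AntitoneOn (fun x => log (exp (x * L) - 1) - L / (1 - exp (-L)) * log x) (Ioc 0 1) := by
  have hpos : ∀ x : ℝ, 0 < x → 0 < exp (x * L) - 1 := fun x hx =>
    sub_pos.2 (one_lt_exp_iff.2 (mul_pos hx hL))
  have hderiv : ∀ x : ℝ, 0 < x → HasDerivAt
      (fun x => log (exp (x * L) - 1) - L / (1 - exp (-L)) * log x)
      (exp (x * L) * L / (exp (x * L) - 1) - L / (1 - exp (-L)) * x⁻¹) x := fun x hx =>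
    ((((hasDerivAt_mul_const L).exp).sub_const 1).log (hpos x hx).ne').sub
      ((hasDerivAt_log hx.ne').const_mul _)
  refine antitoneOn_of_deriv_nonpos (convex_Ioc 0 1)
    (fun x hx => (hderiv x hx.1).continuousAt.continuousWithinAt)
    (fun x hx => (hderiv x (interior_subset hx).1).differentiableAt.differentiableWithinAt)
    fun x hx => ?_
  rw [interior_Ioc] at hx
  obtain ⟨hx0, hx1⟩ := hx
  rw [(hderiv x hx0).deriv]
  have hq := div_one_sub_exp_neg_le_div_one_sub_exp_neg (mul_pos hx0 hL)
    (mul_le_of_le_one_left hL.le hx1.le)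
  have hE := hpos x hx0
  have hderiv_eq : exp (x * L) * L / (exp (x * L) - 1) = x * L / (1 - exp (-(x * L))) * x⁻¹ := by
    rw [exp_neg]
    field_simp
  rw [hderiv_eq, sub_nonpos]
  exact mul_le_mul_of_nonneg_right hq (inv_nonneg.2 hx0.le)

lemma exp_sub_one_mul_rpow_le_exp_mul_sub_one {L s : ℝ} (hL : 0 < L) (hs0 : 0 < s) (hs1 : s ≤ 1) :
    (exp L - 1) * s ^ (L / (1 - exp (-L))) ≤ exp (s * L) - 1 := by
  have hanti := antitoneOn_log_exp_mul_sub_one_sub_log hL ⟨hs0, hs1⟩ ⟨one_pos, le_rfl⟩ hs1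
  simp only [one_mul, log_one, mul_zero, sub_zero] at hanti
  have hL1 : 0 < exp L - 1 := sub_pos.2 (one_lt_exp_iff.2 hL)
  rw [← log_le_log_iff (by positivity) (sub_pos.2 (one_lt_exp_iff.2 (mul_pos hs0 hL))),
    log_mul hL1.ne' (by positivity), log_rpow hs0]
  linarith

lemma log_one_add_sub_one_mul_rpow_le {τ k s : ℝ} (hτ : 1 < τ) (hk : τ * log τ / (τ - 1) ≤ k)
    (hs0 : 0 < s) (hs1 : s ≤ 1) : log (1 + (τ - 1) * s ^ k) ≤ s * log τ := by
  have hτ0 : 0 < τ := one_pos.trans hτ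
  have hexp : exp (log τ) = τ := exp_log hτ0
  have hc : log τ / (1 - exp (-log τ)) = τ * log τ / (τ - 1) := by
    rw [exp_neg, hexp]
    field_simp
  have hkey := exp_sub_one_mul_rpow_le_exp_mul_sub_one (log_pos hτ) hs0 hs1
  rw [hexp, hc] at hkey
  have hpow : s ^ k ≤ s ^ (τ * log τ / (τ - 1)) := rpow_le_rpow_of_exponent_ge hs0 hs1 hk
  have hτ1 : 0 < τ - 1 := sub_pos.2 hτ
  calc log (1 + (τ - 1) * s ^ k) ≤ log (exp (s * log τ)) :=
        log_le_log (by positivity) (by nlinarith)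
    _ = s * log τ := log_exp _

theorem stmt10_general (τ r η₂ η₃ : ℝ) (k : ℕ) (hτ : 1 < τ)
    (hkτ : (k : ℝ) ≥ τ * Real.log τ / (τ - 1))
    (hr : r < 1 / Real.log τ)
    (hη₂ : 0 < η₂) (hη₂₃ : η₂ < η₃) (hη₃ : η₃ < 1) :
    sSup ((fun s : ℝ => r * Real.log (1 + (τ - 1) * s ^ k) - s) '' Set.Icc η₂ η₃) < 0 := by
  have hτ1 : 0 < τ - 1 := sub_pos.2 hτ
  have harg : ∀ s ∈ Icc η₂ η₃, 1 + (τ - 1) * s ^ k ≠ 0 := fun s hs => by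
    have := hη₂.trans_le hs.1
    positivity
  have hcont : ContinuousOn (fun s : ℝ => r * log (1 + (τ - 1) * s ^ k) - s) (Icc η₂ η₃) := by
    fun_prop (disch := exact harg)
  rw [isCompact_Icc.sSup_lt_iff_of_continuous (nonempty_Icc.2 hη₂₃.le) hcont]
  rintro s ⟨hs₂, hs₃⟩
  have hs0 : 0 < s := hη₂.trans_le hs₂
  have hlog : log (1 + (τ - 1) * s ^ k) ≤ s * log τ := by
    simpa only [rpow_natCast] using
      log_one_add_sub_one_mul_rpow_le (k := k) hτ hkτ hs0 (hs₃.trans hη₃.le)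
  have hlog0 : 0 < log (1 + (τ - 1) * s ^ k) := log_pos (lt_add_of_pos_right 1 (by positivity))
  have hL : 0 < log τ := log_pos hτ
  calc r * log (1 + (τ - 1) * s ^ k) - s < 1 / log τ * log (1 + (τ - 1) * s ^ k) - s := by
        gcongr
    _ ≤ 0 := by
        rw [sub_nonpos, one_div_mul_eq_div, div_le_iff₀ hL]
        exact hlog

/-- for τ > 1, k ≥ 2 with k ≥ τ ln τ/(τ-1), 0 < r < 1/ln τ and
0 < η₂ < η₃ < 1, the maximum of φ(s) = r ln(1 + (τ-1)s^k) - s over [η₂, η₃] is negative. -/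
theorem stmt10 (τ r η₂ η₃ : ℝ) (k : ℕ) (hτ : 1 < τ) (hk : 2 ≤ k)
    (hkτ : (k : ℝ) ≥ τ * Real.log τ / (τ - 1))
    (hr0 : 0 < r) (hr : r < 1 / Real.log τ)
    (hη₂ : 0 < η₂) (hη₂₃ : η₂ < η₃) (hη₃ : η₃ < 1) :
    sSup ((fun s : ℝ => r * Real.log (1 + (τ - 1) * s ^ k) - s) '' Set.Icc η₂ η₃) < 0 :=
  stmt10_general τ r η₂ η₃ k hτ hkτ hr hη₂ hη₂₃ hη₃
end

section
/- Let τ > 1 be real and k ≥ 2 an integer, and define u(s) = τ^s − (τ−1)·s^k − 1. Then u(s) > 0 for every s ∈ (0,1) if and only if k ≥ τ·ln τ/(τ−1). -/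
open Real Set Filter Topology

/-!
Since `u 0 = u 1 = 0`, positivity of `u` on `(0, 1)` forces `u' 1 ≤ 0`, and
`u' 1 = τ ln τ - (τ - 1) k`. Conversely, for `s > 0` both terms of
`u' s = τ^s ln τ - (τ - 1) k s^(k-1)` are positive, so `u' s ≥ 0` iff the line
`ln ln τ - ln ((τ - 1) k) + s ln τ` lies above `(k - 1) ln s`. By strict concavity of the
logarithm this cannot fail at `x` and at `1` while holding at some `y ∈ (x, 1)`. Yet if `u s ≤ 0`
for some `s ∈ (0, 1)`, the mean value theorem on `[0, s]` and `[s, 1]` gives such `x < s < y`.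
-/

lemma HasDerivAt.nonpos_of_eventually_le_nhdsLT {f : ℝ → ℝ} {f' b : ℝ} (hf : HasDerivAt f f' b)
    (hle : ∀ᶠ x in 𝓝[<] b, f b ≤ f x) : f' ≤ 0 := by
  refine le_of_tendsto (hasDerivAt_iff_tendsto_slope_left_right.1 hf).1 ?_
  filter_upwards [hle, self_mem_nhdsWithin] with x hx (hxb : x < b)
  rw [slope_def_field]
  exact div_nonpos_of_nonneg_of_nonpos (sub_nonneg.2 hx) (sub_nonpos.2 hxb.le)

lemma exists_deriv_nonpos_and_deriv_nonneg {f f' : ℝ → ℝ} {a s b : ℝ}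
    (hf : ∀ x ∈ Icc a b, HasDerivAt f (f' x) x) (has : a < s) (hsb : s < b)
    (ha : f s ≤ f a) (hb : f s ≤ f b) : ∃ x ∈ Ioo a s, ∃ y ∈ Ioo s b, f' x ≤ 0 ∧ 0 ≤ f' y := by
  have hf_on {c d : ℝ} (hac : a ≤ c) (hdb : d ≤ b) :
      ContinuousOn f (Icc c d) ∧ ∀ x ∈ Ioo c d, HasDerivAt f (f' x) x :=
    ⟨fun x hx => (hf x ⟨hac.trans hx.1, hx.2.trans hdb⟩).continuousAt.continuousWithinAt,
      fun x hx => hf x ⟨hac.trans hx.1.le, hx.2.le.trans hdb⟩⟩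
  obtain ⟨x, hx, hfx⟩ := exists_hasDerivAt_eq_slope f f' has (hf_on le_rfl hsb.le).1
    (hf_on le_rfl hsb.le).2
  obtain ⟨y, hy, hfy⟩ := exists_hasDerivAt_eq_slope f f' hsb (hf_on has.le le_rfl).1
    (hf_on has.le le_rfl).2
  refine ⟨x, hx, y, hy, ?_, ?_⟩
  · rw [hfx]
    exact div_nonpos_of_nonpos_of_nonneg (sub_nonpos.2 ha) (sub_nonneg.2 has.le)
  · rw [hfy]
    exact div_nonneg (sub_nonneg.2 hb) (sub_nonneg.2 hsb.le)

lemma add_mul_lt_mul_log_of_le_of_le {m α β x y z : ℝ} (hm : 0 < m) (hx : 0 < x) (hxy : x < y)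
    (hyz : y < z) (hLx : α + β * x ≤ m * log x) (hLz : α + β * z ≤ m * log z) :
    α + β * y < m * log y := by
  obtain ⟨a, b, ha, hb, hab, rfl⟩ := Ioo_subset_openSegment (𝕜 := ℝ) ⟨hxy, hyz⟩
  have hlog :=
    strictConcaveOn_log_Ioi.2 hx (hx.trans (hxy.trans hyz)) (hxy.trans hyz).ne ha hb hab
  simp only [smul_eq_mul] at hlog ⊢
  calc α + β * (a * x + b * z) = a * (α + β * x) + b * (α + β * z) := by
        linear_combination (-α) * hab
    _ ≤ a * (m * log x) + b * (m * log z) := by gcongr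
    _ = m * (a * log x + b * log z) := by ring
    _ < m * log (a * x + b * z) := by gcongr

noncomputable def gap (τ : ℝ) (k : ℕ) (s : ℝ) : ℝ := τ ^ s - (τ - 1) * s ^ k - 1

noncomputable def gapDeriv (τ : ℝ) (k : ℕ) (s : ℝ) : ℝ :=
  τ ^ s * log τ - (τ - 1) * (k * s ^ (k - 1))

section

variable {τ : ℝ} {k : ℕ}

lemma hasDerivAt_gap (hτ : 0 < τ) (s : ℝ) : HasDerivAt (gap τ k) (gapDeriv τ k s) s :=
  ((hasStrictDerivAt_const_rpow hτ s).hasDerivAt.sub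
    ((hasDerivAt_pow k s).const_mul (τ - 1))).sub_const 1

lemma gap_zero (hk : k ≠ 0) : gap τ k 0 = 0 := by
  simp [gap, zero_pow hk]

lemma gap_one : gap τ k 1 = 0 := by
  simp [gap]

lemma gapDeriv_one : gapDeriv τ k 1 = τ * log τ - (τ - 1) * k := by
  simp [gapDeriv]

lemma gapDeriv_eq_exp_sub_exp (hτ : 1 < τ) (hk : 1 ≤ k) {s : ℝ} (hs : 0 < s) :
    gapDeriv τ k s = exp (log (log τ) + log τ * s) - exp (log ((τ - 1) * k) + (k - 1) * log s) := by
  have hlogτ : 0 < log τ := log_pos hτ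
  have hk0 : (0 : ℝ) < k := by exact_mod_cast hk
  have hpow : exp ((k - 1) * log s) = s ^ (k - 1) := by
    rw [← Nat.cast_pred hk, ← log_pow, exp_log (pow_pos hs _)]
  rw [exp_add, exp_add, exp_log hlogτ, exp_log (mul_pos (by linarith) hk0), hpow,
    ← rpow_def_of_pos (by linarith), gapDeriv]
  ring

lemma gapDeriv_nonneg_iff (hτ : 1 < τ) (hk : 1 ≤ k) {s : ℝ} (hs : 0 < s) :
    0 ≤ gapDeriv τ k s ↔ (k - 1) * log s ≤ log (log τ) - log ((τ - 1) * k) + log τ * s := by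
  rw [gapDeriv_eq_exp_sub_exp hτ hk hs, sub_nonneg, exp_le_exp]
  constructor <;> intro h <;> linarith

lemma gapDeriv_nonpos_iff (hτ : 1 < τ) (hk : 1 ≤ k) {s : ℝ} (hs : 0 < s) :
    gapDeriv τ k s ≤ 0 ↔ log (log τ) - log ((τ - 1) * k) + log τ * s ≤ (k - 1) * log s := by
  rw [gapDeriv_eq_exp_sub_exp hτ hk hs, sub_nonpos, exp_le_exp]
  constructor <;> intro h <;> linarith

lemma gapDeriv_one_nonpos_of_gap_pos (hτ : 1 < τ) (hgap : ∀ s ∈ Ioo (0 : ℝ) 1, 0 < gap τ k s) :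
    gapDeriv τ k 1 ≤ 0 := by
  refine (hasDerivAt_gap (by linarith) 1).nonpos_of_eventually_le_nhdsLT ?_
  filter_upwards [Ioo_mem_nhdsLT zero_lt_one] with s hs
  exact gap_one.trans_le (hgap s hs).le

lemma gap_pos_of_gapDeriv_one_nonpos (hτ : 1 < τ) (hk : 2 ≤ k) (h1 : gapDeriv τ k 1 ≤ 0) :
    ∀ s ∈ Ioo (0 : ℝ) 1, 0 < gap τ k s := by
  intro s ⟨hs0, hs1⟩
  by_contra! hs
  have hk1 : (0 : ℝ) < k - 1 := by
    have : (2 : ℝ) ≤ k := by exact_mod_cast hk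
    linarith
  obtain ⟨x, ⟨hx0, hxs⟩, y, ⟨hsy, hy1⟩, hx, hy⟩ := exists_deriv_nonpos_and_deriv_nonneg
    (fun x _ => hasDerivAt_gap (by linarith) x) hs0 hs1
    (hs.trans (gap_zero (by omega)).ge) (hs.trans gap_one.ge)
  rw [gapDeriv_nonpos_iff hτ (by omega) hx0] at hx
  rw [gapDeriv_nonneg_iff hτ (by omega) (hx0.trans (hxs.trans hsy))] at hy
  rw [gapDeriv_nonpos_iff hτ (by omega) one_pos] at h1
  exact hy.not_gt (add_mul_lt_mul_log_of_le_of_le hk1 hx0 (hxs.trans hsy) hy1 hx h1)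

end

/-- for τ > 1 and an integer k ≥ 2, with u(s) = τ^s - (τ-1)s^k - 1,
one has u(s) > 0 for all s ∈ (0,1) iff k ≥ τ ln τ/(τ-1). -/
theorem stmt14 (τ : ℝ) (k : ℕ) (hτ : 1 < τ) (hk : 2 ≤ k) :
    (∀ s ∈ Set.Ioo (0 : ℝ) 1, 0 < τ ^ s - (τ - 1) * s ^ k - 1) ↔
      (k : ℝ) ≥ τ * Real.log τ / (τ - 1) := by
  have hcond : (k : ℝ) ≥ τ * log τ / (τ - 1) ↔ gapDeriv τ k 1 ≤ 0 := by
    rw [ge_iff_le, div_le_iff₀ (by linarith), gapDeriv_one, sub_nonpos, mul_comm (k : ℝ)]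
  rw [hcond]
  exact ⟨gapDeriv_one_nonpos_of_gap_pos hτ, gap_pos_of_gapDeriv_one_nonpos hτ hk⟩
end

section
/- For each integer k ≥ 2 let τ_k be the unique real in (1, ∞) with ζ(τ_k) = k. Then τ_k · e^{−k} → 1 as k → ∞, i.e. τ_k ∼ e^k. -/
/-!
If `ζ(τ) = k` with `τ > 1`, then `log τ = k - k/τ`, so `τ e^{-k} = e^{-k/τ}`. Since `log τ < τ - 1`
forces `ζ(τ) < τ`, we get `k/τ < 1`, hence `τ ≥ e^{k-1}` and `k/τ ≤ k e^{1-k} → 0`.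
-/

/-- `ζ(z) = z ln z/(z-1)`. -/
noncomputable def zetaRB (z : ℝ) : ℝ := z * Real.log z / (z - 1)

open Real Filter Topology

lemma log_eq_sub_div_of_zetaRB_eq {z c : ℝ} (hz : 1 < z) (h : zetaRB z = c) :
    log z = c - c / z := by
  have hz0 : z ≠ 0 := by positivity
  have hz1 : z - 1 ≠ 0 := by linarith
  rw [zetaRB, div_eq_iff hz1] at h
  field_simp
  linarith

lemma zetaRB_lt_self {z : ℝ} (hz : 1 < z) : zetaRB z < z := by
  rw [zetaRB, div_lt_iff₀ (by linarith)]
  have := log_lt_sub_one_of_pos (by linarith) hz.ne'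
  nlinarith

lemma mul_exp_neg_eq_of_zetaRB_eq {z c : ℝ} (hz : 1 < z) (h : zetaRB z = c) :
    z * exp (-c) = exp (-(c / z)) := by
  conv_lhs => rw [← exp_log (by positivity : 0 < z)]
  rw [← exp_add, log_eq_sub_div_of_zetaRB_eq hz h]
  ring_nf

lemma exp_sub_one_le_of_zetaRB_eq {z c : ℝ} (hz : 1 < z) (h : zetaRB z = c) :
    exp (c - 1) ≤ z := by
  have hz0 : 0 < z := by positivity
  have hcz : c / z < 1 := (div_lt_one hz0).2 (h ▸ zetaRB_lt_self hz)
  rw [← exp_log hz0, exp_le_exp, log_eq_sub_div_of_zetaRB_eq hz h]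
  linarith

lemma tendsto_natCast_div_exp_sub_one :
    Tendsto (fun k : ℕ => (k : ℝ) / exp (k - 1)) atTop (𝓝 0) := by
  have h := ((tendsto_pow_mul_exp_neg_atTop_nhds_zero 1).comp
    tendsto_natCast_atTop_atTop).const_mul (exp 1)
  rw [mul_zero] at h
  refine h.congr fun k => ?_
  simp only [Function.comp, pow_one, exp_sub, exp_neg]
  field_simp

/-- if τ_k > 1 solves ζ(τ_k) = k for each integer k ≥ 2, then
τ_k e^{-k} → 1 as k → ∞, i.e. τ_k ∼ e^k. -/
theorem stmt16 (τ : ℕ → ℝ) (hτ : ∀ k : ℕ, 2 ≤ k → 1 < τ k ∧ zetaRB (τ k) = k) :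
    Filter.Tendsto (fun k : ℕ => τ k * Real.exp (-(k : ℝ))) Filter.atTop (nhds 1) := by
  have hτ' : ∀ᶠ k in atTop, 1 < τ k ∧ zetaRB (τ k) = k := eventually_atTop.2 ⟨2, hτ⟩
  have hdiv : Tendsto (fun k : ℕ => (k : ℝ) / τ k) atTop (𝓝 0) := by
    refine squeeze_zero' ?_ ?_ tendsto_natCast_div_exp_sub_one
    · filter_upwards [hτ'] with k ⟨h1, _⟩
      exact div_nonneg (Nat.cast_nonneg k) (by linarith)
    · filter_upwards [hτ'] with k ⟨h1, hk⟩
      exact div_le_div_of_nonneg_left (Nat.cast_nonneg k) (exp_pos _)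
        (exp_sub_one_le_of_zetaRB_eq h1 hk)
  have hexp : Tendsto (fun k : ℕ => exp (-((k : ℝ) / τ k))) atTop (𝓝 1) := by
    simpa using hdiv.neg.rexp
  refine hexp.congr' ?_
  filter_upwards [hτ'] with k ⟨h1, hk⟩
  exact (mul_exp_neg_eq_of_zetaRB_eq h1 hk).symm
end

section
/- Fix an integer k ≥ 2. There exist a constant C > 0 and an integer N such that for all n ≥ N and all integers S with 0 ≤ S ≤ n, | C(S,k)/C(n,k) − ( (S/n)^k − (k(k−1)/(2n))·(1 − S/n)·(S/n)^{k−1} ) | ≤ C/n², where C(S,k) = 0 when S < k. -/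
/-!
With `x = S / n`, the ratio `C(S,k) / C(n,k)` is the product of the `k` factors
`(S - i) / (n - i) = x - εᵢ`, where `εᵢ = i (n - S) / (n (n - i))` lies in `[0, 2k/n]` once `2k ≤ n`.
Expanding the product to first order in the `εᵢ` costs `O(k² (k/n)²)`, and replacing each `εᵢ` by
its leading term `i (n - S) / n²` costs `O(k³ / n²)`; the leading terms sum to `k(k-1)/(2n) (1 - x)`.
-/

open Finset

theorem cast_choose_div_cast_choose {K : Type*} [Field K] [CharZero K] (S n k : ℕ) :
    (S.choose k : K) / n.choose k = ∏ i ∈ range k, ((S : K) - i) / (n - i) := by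
  have hdesc (m : ℕ) : (m.descFactorial k : K) = ∏ i ∈ range k, ((m : K) - i) := by
    rw [← descPochhammer_eval_eq_descFactorial, descPochhammer_eval_eq_prod_range]
  rw [prod_div_distrib, ← hdesc, ← hdesc, Nat.descFactorial_eq_factorial_mul_choose,
    Nat.descFactorial_eq_factorial_mul_choose, Nat.cast_mul, Nat.cast_mul,
    mul_div_mul_left _ _ (Nat.cast_ne_zero.2 k.factorial_ne_zero)]

theorem abs_prod_sub_sub_sum_mul_pow_le {x M : ℝ} (hx₀ : 0 ≤ x) (hx₁ : x ≤ 1) (hM : M ≤ 1)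
    {ε : ℕ → ℝ} {m : ℕ} (hε : ∀ i < m, 0 ≤ ε i ∧ ε i ≤ M) :
    |∏ i ∈ range m, (x - ε i) - (x ^ m - (∑ i ∈ range m, ε i) * x ^ (m - 1))| ≤
      m ^ 2 * M ^ 2 := by
  induction m with
  | zero => simp
  | succ m ih =>
    obtain ⟨hεm₀, hεmM⟩ := hε m m.lt_succ_self
    have hM₀ : 0 ≤ M := hεm₀.trans hεmM
    have hε' : ∀ i ∈ range m, 0 ≤ ε i ∧ ε i ≤ M := fun i hi =>
      hε i ((mem_range.1 hi).trans m.lt_succ_self)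
    set P := ∏ i ∈ range m, (x - ε i)
    set s := ∑ i ∈ range m, ε i
    have hs₀ : 0 ≤ s := sum_nonneg fun i hi => (hε' i hi).1
    have hsM : s ≤ m * M := by
      calc s ≤ ∑ _i ∈ range m, M := sum_le_sum fun i hi => (hε' i hi).2
        _ = m * M := by simp
    -- `x ^ (m - 1) * x = x ^ m` fails only for `m = 0`, where `s = 0`
    have hs_pow : s * x ^ m = s * x ^ (m - 1) * x := by
      rcases m with _ | m
      · simp [s]
      · rw [mul_assoc, ← pow_succ, Nat.add_sub_cancel]
    have hsplit : P * (x - ε m) - (x ^ (m + 1) - (s + ε m) * x ^ m) =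
        (x - ε m) * (P - (x ^ m - s * x ^ (m - 1))) + ε m * s * x ^ (m - 1) := by
      linear_combination hs_pow
    have hxε : |x - ε m| ≤ 1 := abs_le.2 ⟨by linarith, by linarith⟩
    have hpow : x ^ (m - 1) ≤ 1 := pow_le_one₀ hx₀ hx₁
    rw [prod_range_succ, sum_range_succ, Nat.add_sub_cancel, hsplit]
    calc _ ≤ |(x - ε m) * (P - (x ^ m - s * x ^ (m - 1)))| + |ε m * s * x ^ (m - 1)| :=
          abs_add_le _ _
      _ = |x - ε m| * |P - (x ^ m - s * x ^ (m - 1))| + ε m * s * x ^ (m - 1) := by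
          rw [abs_mul, abs_of_nonneg (mul_nonneg (mul_nonneg hεm₀ hs₀) (pow_nonneg hx₀ _))]
      _ ≤ 1 * (m ^ 2 * M ^ 2) + M * (m * M) * 1 := by
          gcongr
          exact ih fun i hi => hε' i (mem_range.2 hi)
      _ ≤ ((m + 1 : ℕ) : ℝ) ^ 2 * M ^ 2 := by push_cast; nlinarith [sq_nonneg M]

section Deviation

variable {n S i : ℝ}

theorem div_eq_div_sub_deviation (hn : n ≠ 0) (hi : n - i ≠ 0) :
    (S - i) / (n - i) = S / n - i * (n - S) / (n * (n - i)) := by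
  field_simp
  ring

theorem deviation_nonneg_and_le (hn : 0 < n) (hS₀ : 0 ≤ S) (hSn : S ≤ n) (hi₀ : 0 ≤ i)
    (hi : 2 * i ≤ n) : 0 ≤ i * (n - S) / (n * (n - i)) ∧
    i * (n - S) / (n * (n - i)) ≤ 2 * i / n := by
  have hni : 0 < n - i := by linarith
  refine ⟨by apply div_nonneg <;> nlinarith, ?_⟩
  rw [div_le_div_iff₀ (by positivity) hn]
  nlinarith [mul_nonneg (mul_nonneg hi₀ hn.le) (by linarith : 0 ≤ n - 2 * i + S)]

theorem abs_deviation_sub_le (hn : 0 < n) (hS₀ : 0 ≤ S) (hSn : S ≤ n) (hi : 2 * i ≤ n) :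
    |i * (n - S) / (n * (n - i)) - i * (n - S) / n ^ 2| ≤ 2 * i ^ 2 / n ^ 2 := by
  have hni : 0 < n - i := by linarith
  have hdiff : i * (n - S) / (n * (n - i)) - i * (n - S) / n ^ 2 =
      i ^ 2 * (n - S) / (n ^ 2 * (n - i)) := by
    field_simp
    ring
  rw [hdiff, abs_of_nonneg (by apply div_nonneg <;> nlinarith),
    div_le_div_iff₀ (by positivity) (by positivity)]
  nlinarith [mul_nonneg (mul_nonneg (sq_nonneg i) (sq_nonneg n)) (by linarith : 0 ≤ n - 2 * i + S)]

end Deviation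

theorem sum_range_cast_id (k : ℕ) : ∑ i ∈ range k, (i : ℝ) = k * (k - 1) / 2 := by
  induction k with
  | zero => simp
  | succ k ih =>
    rw [sum_range_succ, ih]
    push_cast
    ring

theorem abs_sum_deviation_sub_le {n S : ℝ} {k : ℕ} (hn : 0 < n) (hS₀ : 0 ≤ S) (hSn : S ≤ n)
    (hk : 2 * k ≤ n) :
    |∑ i ∈ range k, i * (n - S) / (n * (n - i)) - k * (k - 1) / (2 * n) * (1 - S / n)| ≤
      2 * k ^ 3 / n ^ 2 := by
  have hlin : ∑ i ∈ range k, (i : ℝ) * (n - S) / n ^ 2 = k * (k - 1) / (2 * n) * (1 - S / n) := by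
    rw [← sum_div, ← sum_mul, sum_range_cast_id]
    field_simp
  rw [← hlin, ← sum_sub_distrib]
  calc _ ≤ ∑ i ∈ range k, |i * (n - S) / (n * (n - i)) - i * (n - S) / n ^ 2| :=
        abs_sum_le_sum_abs _ _
    _ ≤ ∑ _i ∈ range k, 2 * (k : ℝ) ^ 2 / n ^ 2 := sum_le_sum fun i hi => by
        have hik : (i : ℝ) ≤ k := by exact_mod_cast (mem_range.1 hi).le
        refine (abs_deviation_sub_le hn hS₀ hSn (by linarith)).trans ?_
        gcongr
    _ = 2 * k ^ 3 / n ^ 2 := by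
        rw [sum_const, card_range, nsmul_eq_mul]
        ring

theorem abs_sub_sub_mul_le_add {P a s t y : ℝ} (hy₀ : 0 ≤ y) (hy₁ : y ≤ 1) :
    |P - (a - t * y)| ≤ |P - (a - s * y)| + |s - t| :=
  calc |P - (a - t * y)| = |P - (a - s * y) - (s - t) * y| := by congr 1; ring
    _ ≤ |P - (a - s * y)| + |(s - t) * y| := abs_sub _ _
    _ ≤ |P - (a - s * y)| + |s - t| := by
        rw [abs_mul, abs_of_nonneg hy₀]
        gcongr
        exact mul_le_of_le_one_right (abs_nonneg _) hy₁

theorem stmt17_general (k : ℕ) :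
    ∃ C : ℝ, 0 < C ∧ ∃ N : ℕ, ∀ n : ℕ, N ≤ n → ∀ S : ℕ, S ≤ n →
      |(S.choose k : ℝ) / (n.choose k : ℝ) -
          (((S : ℝ) / n) ^ k -
            ((k : ℝ) * ((k : ℝ) - 1) / (2 * n)) * (1 - (S : ℝ) / n) * ((S : ℝ) / n) ^ (k - 1))| ≤
        C / (n : ℝ) ^ 2 := by
  refine ⟨4 * k ^ 4 + 2 * k ^ 3 + 1, by positivity, 2 * k + 1, fun n hn S hS => ?_⟩
  have hn₀ : (0 : ℝ) < n := by exact_mod_cast (by omega : 0 < n)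
  have hkn : 2 * (k : ℝ) ≤ n := by exact_mod_cast (by omega : 2 * k ≤ n)
  have hSn : (S : ℝ) ≤ n := by exact_mod_cast hS
  set x := (S : ℝ) / n
  set ε : ℕ → ℝ := fun i => i * (n - S) / (n * (n - i))
  have hε : ∀ i < k, 0 ≤ ε i ∧ ε i ≤ 2 * k / n := fun i hi => by
    have hik : (i : ℝ) ≤ k := by exact_mod_cast hi.le
    obtain ⟨h₀, h₁⟩ := deviation_nonneg_and_le hn₀ S.cast_nonneg hSn i.cast_nonneg (by linarith)
    exact ⟨h₀, h₁.trans (by gcongr)⟩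
  have hfactor : ∀ i ∈ range k, ((S : ℝ) - i) / (n - i) = x - ε i := fun i hi => by
    have hik : (i : ℝ) < k := by exact_mod_cast mem_range.1 hi
    exact div_eq_div_sub_deviation hn₀.ne' (by linarith)
  have hx₀ : 0 ≤ x := by positivity
  have hx₁ : x ≤ 1 := (div_le_one hn₀).2 hSn
  rw [cast_choose_div_cast_choose, prod_congr rfl hfactor]
  calc _ ≤ |∏ i ∈ range k, (x - ε i) - (x ^ k - (∑ i ∈ range k, ε i) * x ^ (k - 1))| +
        |∑ i ∈ range k, ε i - k * (k - 1) / (2 * n) * (1 - x)| :=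
        abs_sub_sub_mul_le_add (pow_nonneg hx₀ _) (pow_le_one₀ hx₀ hx₁)
    _ ≤ k ^ 2 * (2 * k / n) ^ 2 + 2 * k ^ 3 / n ^ 2 :=
        add_le_add (abs_prod_sub_sub_sum_mul_pow_le hx₀ hx₁ ((div_le_one hn₀).2 hkn) hε)
          (abs_sum_deviation_sub_le hn₀ S.cast_nonneg hSn hkn)
    _ = (4 * k ^ 4 + 2 * k ^ 3) / n ^ 2 := by ring
    _ ≤ (4 * k ^ 4 + 2 * k ^ 3 + 1) / n ^ 2 :=
        div_le_div_of_nonneg_right (by linarith) (by positivity)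

/-- for fixed k ≥ 2 there are C > 0 and N such that for all n ≥ N and
0 ≤ S ≤ n, |C(S,k)/C(n,k) - ((S/n)^k - (k(k-1)/(2n))(1 - S/n)(S/n)^{k-1})| ≤ C/n². -/
theorem stmt17 (k : ℕ) (hk : 2 ≤ k) :
    ∃ C : ℝ, 0 < C ∧ ∃ N : ℕ, ∀ n : ℕ, N ≤ n → ∀ S : ℕ, S ≤ n →
      |(S.choose k : ℝ) / (n.choose k : ℝ) -
          (((S : ℝ) / n) ^ k -
            ((k : ℝ) * ((k : ℝ) - 1) / (2 * n)) * (1 - (S : ℝ) / n) * ((S : ℝ) / n) ^ (k - 1))| ≤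
        C / (n : ℝ) ^ 2 :=
  stmt17_general k
end

section
/- Let n ≥ 2 and ω be integers with 1 ≤ ω ≤ n−1, and set A(ω) = −Γ′(ω+1)/Γ(ω+1) + Γ′(n−ω+1)/Γ(n−ω+1), where Γ is the Gamma function. Then ln(n/ω − 1) + (1/2)·( 1/(n−ω+1) − 1/ω ) < A(ω) < ln(n/ω − 1) + (1/2)·( 1/(n−ω) − 1/(ω+1) ). -/
/-!
Writing `m = n - ω`, the digamma identity `Γ'(k + 1) / Γ(k + 1) = H_k - γ` turns `A(ω)` into
`H_m - H_ω`. The sequence `H_k - log k - 1 / (2k)` increases to `γ` and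
`H_k - log k - 1 / (2(k + 1))` decreases to `γ`: their increments are governed by the trapezoid
and midpoint bounds `2 / (2k + 1) < log (1 + 1 / k) < 1 / (2k) + 1 / (2(k + 1))`, both read off
the series of `log (1 + 1 / k)` in odd powers of `1 / (2k + 1)`. Hence
`γ + 1 / (2(k + 1)) < H_k - log k < γ + 1 / (2k)`, and subtracting these bounds for `k = ω` from
those for `k = m` gives the claim.
-/

open Real Filter Topology

local notation "γ" => eulerMascheroniConstant

theorem lt_of_tendsto_of_forall_lt_succ {α : Type*} [Preorder α] [TopologicalSpace α]
    [OrderClosedTopology α] {f : ℕ → α} {a : α} {k : ℕ} (hf : ∀ j, k ≤ j → f j < f (j + 1))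
    (ha : Tendsto f atTop (𝓝 a)) : f k < a := by
  have hmono : StrictMono fun j ↦ f (j + k) :=
    strictMono_nat_of_lt_succ fun j ↦ by simpa [add_right_comm] using hf (j + k) (by omega)
  simpa using (hmono zero_lt_one).trans_le
    (hmono.monotone.ge_of_tendsto ((tendsto_add_atTop_iff_nat k).2 ha) 1)

theorem lt_of_tendsto_of_forall_succ_lt {α : Type*} [Preorder α] [TopologicalSpace α]
    [OrderClosedTopology α] {f : ℕ → α} {a : α} {k : ℕ} (hf : ∀ j, k ≤ j → f (j + 1) < f j)
    (ha : Tendsto f atTop (𝓝 a)) : a < f k :=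
  lt_of_tendsto_of_forall_lt_succ (α := αᵒᵈ) hf ha

theorem two_div_two_mul_add_one_lt_log_one_add_inv {a : ℝ} (ha : 0 < a) :
    2 / (2 * a + 1) < log (1 + a⁻¹) := by
  refine hasSum_lt (i := 1) (fun k ↦ ?_) ?_ (hasSum_ite_eq 0 _) (hasSum_log_one_add_inv ha)
  · split_ifs with hk
    · simp [hk, div_eq_mul_inv]
    · positivity
  · simp only [one_ne_zero, if_false]
    positivity

theorem log_one_add_inv_lt {a : ℝ} (ha : 0 < a) :
    log (1 + a⁻¹) < 1 / (2 * a) + 1 / (2 * (a + 1)) := by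
  obtain ⟨y, hy_def⟩ : ∃ y, y = 1 / (2 * a + 1) := ⟨_, rfl⟩
  have hy : 0 < y := by rw [hy_def]; positivity
  have hy1 : 1 - y ^ 2 = 4 * a * (a + 1) / (2 * a + 1) ^ 2 := by rw [hy_def]; field_simp; ring
  have hgeom := (hasSum_geometric_of_lt_one (sq_nonneg y)
    (by rw [← sub_pos, hy1]; positivity)).mul_left (2 * y)
  have hsum : 2 * y * (1 - y ^ 2)⁻¹ = 1 / (2 * a) + 1 / (2 * (a + 1)) := by
    rw [hy1, hy_def]; field_simp; ring
  rw [← hsum]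
  refine hasSum_lt (i := 1) (fun k ↦ ?_) ?_ (hy_def ▸ hasSum_log_one_add_inv ha) hgeom
  · have hk : 1 / (2 * (k : ℝ) + 1) ≤ 1 := div_le_one_of_le₀ (by simp) (by positivity)
    calc _ ≤ 2 * 1 * y ^ (2 * k + 1) := by gcongr
      _ = _ := by ring
  · norm_num
    nlinarith [pow_pos hy 3]

theorem log_add_one_sub_log {x : ℝ} (hx : 0 < x) : log (x + 1) - log x = log (1 + x⁻¹) := by
  rw [← log_div (by positivity) hx.ne']
  congr 1
  field_simp

theorem harmonic_succ_sub_harmonic (k : ℕ) :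
    (harmonic (k + 1) : ℝ) - harmonic k = 1 / (k + 1) := by
  push_cast [harmonic_succ]
  ring

theorem tendsto_harmonic_sub_log_sub_one_div {c : ℝ} :
    Tendsto (fun k : ℕ ↦ harmonic k - log k - 1 / (2 * (k + c))) atTop (𝓝 γ) := by
  have : Tendsto (fun k : ℕ ↦ 1 / (2 * ((k : ℝ) + c))) atTop (𝓝 0) :=
    tendsto_const_nhds.div_atTop
      ((tendsto_natCast_atTop_atTop.atTop_add tendsto_const_nhds).const_mul_atTop two_pos)
  simpa using tendsto_harmonic_sub_log.sub this

theorem harmonic_sub_log_lt_eulerMascheroniConstant_add {k : ℕ} (hk : k ≠ 0) :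
    harmonic k - log k < γ + 1 / (2 * k) := by
  suffices h : harmonic k - log k - 1 / (2 * (k + 0 : ℝ)) < γ by rw [add_zero] at h; linarith
  refine lt_of_tendsto_of_forall_lt_succ (fun j hj ↦ ?_) tendsto_harmonic_sub_log_sub_one_div
  have hj0 : (0 : ℝ) < j := by norm_cast; omega
  have hbound := log_one_add_inv_lt hj0
  have hlog := log_add_one_sub_log hj0
  have hharm := harmonic_succ_sub_harmonic j
  have hsplit : 1 / ((j : ℝ) + 1) = 2 * (1 / (2 * (j + 1))) := by field_simp
  push_cast [add_zero]
  linarith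

theorem eulerMascheroniConstant_add_lt_harmonic_sub_log {k : ℕ} (hk : k ≠ 0) :
    γ + 1 / (2 * (k + 1)) < harmonic k - log k := by
  rw [← lt_sub_iff_add_lt]
  refine lt_of_tendsto_of_forall_succ_lt (fun j hj ↦ ?_) tendsto_harmonic_sub_log_sub_one_div
  have hj0 : (0 : ℝ) < j := by norm_cast; omega
  have hbound := two_div_two_mul_add_one_lt_log_one_add_inv hj0
  have hlog := log_add_one_sub_log hj0
  have hharm := harmonic_succ_sub_harmonic j
  have hgap : 2 / (2 * (j : ℝ) + 1) - 1 / (j + 1) - 1 / (2 * (j + 1)) + 1 / (2 * (j + 1 + 1)) =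
      3 / (2 * (2 * j + 1) * (j + 1) * (j + 2)) := by field_simp; ring
  have hgap_pos : (0 : ℝ) < 3 / (2 * (2 * j + 1) * (j + 1) * (j + 2)) := by positivity
  push_cast
  linarith

theorem deriv_Gamma_div_Gamma_nat (k : ℕ) :
    deriv Gamma (k + 1) / Gamma (k + 1) = harmonic k - γ := by
  rw [deriv_Gamma_nat, Gamma_nat_eq_factorial]
  field_simp
  ring

theorem stmt19_general (n ω : ℕ) (hω1 : 1 ≤ ω) (hωn : ω ≤ n - 1) :
    Real.log ((n : ℝ) / ω - 1) + (1 / 2) * (1 / ((n : ℝ) - ω + 1) - 1 / ω) <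
        -deriv Real.Gamma ((ω : ℝ) + 1) / Real.Gamma ((ω : ℝ) + 1) +
          deriv Real.Gamma ((n : ℝ) - ω + 1) / Real.Gamma ((n : ℝ) - ω + 1) ∧
      -deriv Real.Gamma ((ω : ℝ) + 1) / Real.Gamma ((ω : ℝ) + 1) +
          deriv Real.Gamma ((n : ℝ) - ω + 1) / Real.Gamma ((n : ℝ) - ω + 1) <
        Real.log ((n : ℝ) / ω - 1) + (1 / 2) * (1 / ((n : ℝ) - ω) - 1 / (ω + 1)) := by
  obtain ⟨m, rfl⟩ : ∃ m, n = ω + m := ⟨n - ω, by omega⟩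
  have hω : ω ≠ 0 := by omega
  have hm : m ≠ 0 := by omega
  have hlog : log (((ω + m : ℕ) : ℝ) / ω - 1) = log m - log ω := by
    rw [← log_div (by positivity) (by positivity)]
    congr 1
    field_simp
    push_cast
    ring
  have half (x : ℝ) : 1 / 2 * (1 / x) = 1 / (2 * x) := one_div_mul_one_div 2 x
  rw [hlog, neg_div, mul_sub, mul_sub, half, half, half, half]
  push_cast
  rw [add_sub_cancel_left, deriv_Gamma_div_Gamma_nat, deriv_Gamma_div_Gamma_nat]
  have hω_upper := harmonic_sub_log_lt_eulerMascheroniConstant_add hω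
  have hm_upper := harmonic_sub_log_lt_eulerMascheroniConstant_add hm
  have hω_lower := eulerMascheroniConstant_add_lt_harmonic_sub_log hω
  have hm_lower := eulerMascheroniConstant_add_lt_harmonic_sub_log hm
  constructor <;> linarith

/-- for integers n ≥ 2 and 1 ≤ ω ≤ n-1, with
A(ω) = -Γ′(ω+1)/Γ(ω+1) + Γ′(n-ω+1)/Γ(n-ω+1), one has
ln(n/ω - 1) + ½(1/(n-ω+1) - 1/ω) < A(ω) < ln(n/ω - 1) + ½(1/(n-ω) - 1/(ω+1)). -/
theorem stmt19 (n ω : ℕ) (hn : 2 ≤ n) (hω1 : 1 ≤ ω) (hωn : ω ≤ n - 1) :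
    Real.log ((n : ℝ) / ω - 1) + (1 / 2) * (1 / ((n : ℝ) - ω + 1) - 1 / ω) <
        -deriv Real.Gamma ((ω : ℝ) + 1) / Real.Gamma ((ω : ℝ) + 1) +
          deriv Real.Gamma ((n : ℝ) - ω + 1) / Real.Gamma ((n : ℝ) - ω + 1) ∧
      -deriv Real.Gamma ((ω : ℝ) + 1) / Real.Gamma ((ω : ℝ) + 1) +
          deriv Real.Gamma ((n : ℝ) - ω + 1) / Real.Gamma ((n : ℝ) - ω + 1) <
        Real.log ((n : ℝ) / ω - 1) + (1 / 2) * (1 / ((n : ℝ) - ω) - 1 / (ω + 1)) :=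
  stmt19_general n ω hω1 hωn
end
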